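/- arXiv:2511.13496 — 3 statements merged into one kernel-verified Lean document; each statement's English description precedes it below -/
import Mathlib

section
/- Let c ∈ ℂ, n ≥ 1, and let g : [1,∞) → ℂ be locally integrable. Then for all t > 1, the operator Ψ_{n,c}[g](t) := ∫₀^1 (1−v)^n g(t^v) (∫₀^1 (1−z)^{n−1} t^{cz(1−v)} dz) dv admits the closed form Ψ_{n,c}[g](t) = (n−1)!/(c^n (log t)^{n+1}) · ∫₁ᵗ (g(u)/u) ( t^c u^{−c} − ∑_{k=0}^{n−1} (c (log t − log u))^k / k! ) du, provided c ≠ 0. -/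
/-!
With `a = c (1 - v) log t`, the inner integral is the integral form of the Taylor remainder of
`exp` at `0`: `a ^ (m + 1) ∫₀¹ (1 - z) ^ m e^{a z} dz = m! (e^a - ∑_{k ≤ m} a^k / k!)`,
proved by induction on `m` through one integration by parts. Since
`a ^ (m + 1) = (1 - v) ^ (m + 1) (c log t) ^ (m + 1)`, this turns `Ψ_{m+1,c}[g](t)` into a
single integral over `v`, and the substitution `u = t ^ v`, `du / u = log t dv`, identifies it
with the right-hand side.
-/

open MeasureTheory intervalIntegral

/-- The operator `Ψ_{n,c}` applied to a function `g`. -/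
noncomputable def PsiOp (n : ℕ) (c : ℂ) (g : ℝ → ℂ) (t : ℝ) : ℂ :=
  ∫ v in (0:ℝ)..1, ((1 - v : ℝ) : ℂ) ^ n * g (t ^ v) *
    ∫ z in (0:ℝ)..1, ((1 - z : ℝ) : ℂ) ^ (n - 1) * Complex.exp (c * z * (1 - v) * Real.log t)

theorem integral_inv_smul_eq_log_smul_integral_rpow {E : Type*} [NormedAddCommGroup E]
    [NormedSpace ℝ E] {t : ℝ} (ht : 0 < t) (f : ℝ → E) :
    ∫ u in (1:ℝ)..t, u⁻¹ • f u = Real.log t • ∫ v in (0:ℝ)..1, f (t ^ v) := by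
  have hcont := (Real.continuous_const_rpow ht.ne').continuousOn (s := Set.uIcc 0 1)
  have hderiv : ∀ v : ℝ, HasDerivAt (fun v : ℝ => t ^ v) (t ^ v * Real.log t) v := fun v =>
    (Real.hasStrictDerivAt_const_rpow ht v).hasDerivAt
  have hsubst : ∫ v in (0:ℝ)..1, (t ^ v * Real.log t) • (fun u => u⁻¹ • f u) (t ^ v)
      = ∫ u in (1:ℝ)..t, u⁻¹ • f u := by
    rcases le_total 1 t with h | h
    · have := integral_deriv_smul_comp_of_deriv_nonneg (g := fun u => u⁻¹ • f u) hcont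
        (fun v _ => hderiv v)
        (fun v _ => mul_nonneg (Real.rpow_nonneg ht.le v) (Real.log_nonneg h))
      rwa [Real.rpow_zero, Real.rpow_one] at this
    · have := integral_deriv_smul_comp_of_deriv_nonpos (g := fun u => u⁻¹ • f u) hcont
        (fun v _ => hderiv v)
        (fun v _ => mul_nonpos_of_nonneg_of_nonpos (Real.rpow_nonneg ht.le v)
          (Real.log_nonpos ht.le h))
      rwa [Real.rpow_zero, Real.rpow_one] at this
  rw [← hsubst, ← intervalIntegral.integral_smul]
  refine integral_congr fun v _ => ?_
  rw [smul_smul, mul_right_comm, mul_inv_cancel₀ (Real.rpow_pos_of_pos ht v).ne', one_mul]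

theorem mul_integral_one_sub_pow_succ_mul_cexp (a : ℂ) (m : ℕ) :
    a * ∫ z in (0:ℝ)..1, ((1 - z : ℝ) : ℂ) ^ (m + 1) * Complex.exp (a * z)
      = (m + 1) * (∫ z in (0:ℝ)..1, ((1 - z : ℝ) : ℂ) ^ m * Complex.exp (a * z)) - 1 := by
  have hderiv : ∀ z : ℝ, HasDerivAt (fun z : ℝ => ((1 - z : ℝ) : ℂ) ^ (m + 1) * Complex.exp (a * z))
      (a * (((1 - z : ℝ) : ℂ) ^ (m + 1) * Complex.exp (a * z))
        - (m + 1) * (((1 - z : ℝ) : ℂ) ^ m * Complex.exp (a * z))) z := by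
    intro z
    have h1 : HasDerivAt (fun z : ℝ => ((1 - z : ℝ) : ℂ)) (-1) z := by
      simpa using ((hasDerivAt_id z).const_sub 1).ofReal_comp
    have h2 : HasDerivAt (fun z : ℝ => Complex.exp (a * z)) (Complex.exp (a * z) * a) z := by
      simpa using (((hasDerivAt_id z).ofReal_comp).const_mul a).cexp
    refine ((h1.fun_pow (m + 1)).fun_mul h2).congr_deriv ?_
    rw [Nat.add_sub_cancel]
    push_cast
    ring
  have hint : ∀ k : ℕ, IntervalIntegrable
      (fun z : ℝ => ((1 - z : ℝ) : ℂ) ^ k * Complex.exp (a * z)) volume 0 1 := fun k =>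
    (by fun_prop : Continuous _).intervalIntegrable _ _
  have hftc := integral_eq_sub_of_hasDerivAt (fun z _ => hderiv z)
    (((hint _).const_mul a).sub ((hint _).const_mul _))
  rw [integral_sub ((hint _).const_mul a) ((hint _).const_mul _),
    intervalIntegral.integral_const_mul, intervalIntegral.integral_const_mul] at hftc
  have hends : ((1 - 1 : ℝ) : ℂ) ^ (m + 1) * Complex.exp (a * (1 : ℝ))
      - ((1 - 0 : ℝ) : ℂ) ^ (m + 1) * Complex.exp (a * (0 : ℝ)) = -1 := by simp
  linear_combination hftc + hends

theorem pow_succ_mul_integral_one_sub_pow_mul_cexp (a : ℂ) (m : ℕ) :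
    a ^ (m + 1) * ∫ z in (0:ℝ)..1, ((1 - z : ℝ) : ℂ) ^ m * Complex.exp (a * z)
      = m.factorial * (Complex.exp a - ∑ k ∈ Finset.range (m + 1), a ^ k / k.factorial) := by
  induction m with
  | zero =>
    rcases eq_or_ne a 0 with rfl | ha
    · simp
    · simp [integral_exp_mul_complex ha, mul_div_cancel₀ _ ha]
  | succ m ih =>
    have hfac : (m.factorial : ℂ) ≠ 0 := Nat.cast_ne_zero.mpr m.factorial_ne_zero
    rw [pow_succ, mul_assoc, mul_integral_one_sub_pow_succ_mul_cexp, Finset.sum_range_succ,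
      Nat.factorial_succ]
    generalize (∫ z in (0:ℝ)..1, ((1 - z : ℝ) : ℂ) ^ m * Complex.exp (a * z)) = I at ih ⊢
    push_cast
    field_simp
    linear_combination (m + 1 : ℂ) * ih

theorem one_sub_pow_succ_mul_integral_cexp {c L : ℂ} (hc : c ≠ 0) (hL : L ≠ 0) (m : ℕ) (v : ℝ) :
    ((1 - v : ℝ) : ℂ) ^ (m + 1) *
        ∫ z in (0:ℝ)..1, ((1 - z : ℝ) : ℂ) ^ m * Complex.exp (c * z * (1 - v) * L)
      = m.factorial / (c ^ (m + 1) * L ^ (m + 1)) *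
        (Complex.exp (c * (1 - v) * L)
          - ∑ k ∈ Finset.range (m + 1), (c * (1 - v) * L) ^ k / k.factorial) := by
  have h := pow_succ_mul_integral_one_sub_pow_mul_cexp (c * (1 - v) * L) m
  simp_rw [show ∀ z : ℝ, c * (1 - v) * L * z = c * z * (1 - v) * L from fun z => by ring] at h
  rw [mul_pow, mul_pow] at h
  have hv : ((1 - v : ℝ) : ℂ) = 1 - v := by push_cast; ring
  rw [hv, div_mul_eq_mul_div, eq_div_iff (by simp [hc, hL])]
  linear_combination h

theorem ofReal_cpow_mul_rpow_cpow_neg {t : ℝ} (ht : 0 < t) (c : ℂ) (v : ℝ) :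
    (t : ℂ) ^ c * ((t ^ v : ℝ) : ℂ) ^ (-c) = Complex.exp (c * (1 - v) * Real.log t) := by
  have ht' : (t : ℂ) ≠ 0 := by exact_mod_cast ht.ne'
  have htv : ((t ^ v : ℝ) : ℂ) ≠ 0 := by exact_mod_cast (Real.rpow_pos_of_pos ht v).ne'
  rw [Complex.cpow_def_of_ne_zero ht', Complex.cpow_def_of_ne_zero htv, ← Complex.exp_add,
    ← Complex.ofReal_log ht.le, ← Complex.ofReal_log (Real.rpow_nonneg ht.le v),
    Real.log_rpow ht]
  push_cast
  ring_nf

theorem stmt_7_general (n : ℕ) (hn : 1 ≤ n) (c : ℂ) (hc : c ≠ 0)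
    (g : ℝ → ℂ) :
    ∀ t : ℝ, 1 < t →
      PsiOp n c g t
        = (Nat.factorial (n - 1) : ℂ) / (c ^ n * (Real.log t : ℂ) ^ (n + 1)) *
          ∫ u in (1:ℝ)..t, g u / (u : ℂ) *
            ((t : ℂ) ^ c * (u : ℂ) ^ (-c)
              - ∑ k ∈ Finset.range n,
                  (c * ((Real.log t : ℂ) - (Real.log u : ℂ))) ^ k / (Nat.factorial k : ℂ)) := by
  obtain ⟨m, rfl⟩ := Nat.exists_eq_add_of_le' hn
  intro t ht
  have ht0 : 0 < t := one_pos.trans ht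
  set L : ℂ := (Real.log t : ℂ)
  have hL : L ≠ 0 := Complex.ofReal_ne_zero.mpr (Real.log_pos ht).ne'
  set T : ℂ → ℂ := fun a => Complex.exp a - ∑ k ∈ Finset.range (m + 1), a ^ k / k.factorial
  have hpsi : PsiOp (m + 1) c g t = m.factorial / (c ^ (m + 1) * L ^ (m + 1)) *
      ∫ v in (0:ℝ)..1, g (t ^ v) * T (c * (1 - v) * L) := by
    rw [PsiOp, ← intervalIntegral.integral_const_mul]
    refine integral_congr fun v _ => ?_
    rw [Nat.add_sub_cancel, mul_right_comm, one_sub_pow_succ_mul_integral_cexp hc hL]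
    ring
  have hsubst : (∫ u in (1:ℝ)..t, g u / (u : ℂ) * ((t : ℂ) ^ c * (u : ℂ) ^ (-c)
        - ∑ k ∈ Finset.range (m + 1), (c * (L - (Real.log u : ℂ))) ^ k / k.factorial))
      = L * ∫ v in (0:ℝ)..1, g (t ^ v) * T (c * (1 - v) * L) := by
    rw [integral_congr (g := fun u : ℝ => u⁻¹ • (g u * ((t : ℂ) ^ c * (u : ℂ) ^ (-c)
        - ∑ k ∈ Finset.range (m + 1), (c * (L - (Real.log u : ℂ))) ^ k / k.factorial)))
        fun u _ => by simp only [Complex.real_smul, Complex.ofReal_inv]; ring,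
      integral_inv_smul_eq_log_smul_integral_rpow ht0, Complex.real_smul]
    refine congrArg _ (integral_congr fun v _ => ?_)
    have hlog : c * (L - (Real.log (t ^ v) : ℂ)) = c * (1 - v) * L := by
      rw [Real.log_rpow ht0]
      push_cast
      ring
    rw [ofReal_cpow_mul_rpow_cpow_neg ht0, hlog]
  rw [hpsi, hsubst, Nat.add_sub_cancel, ← mul_assoc]
  congr 1
  field_simp
  ring

theorem stmt_7 (n : ℕ) (hn : 1 ≤ n) (c : ℂ) (hc : c ≠ 0)
    (g : ℝ → ℂ) (hloc : LocallyIntegrableOn g (Set.Ici 1)) :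
    ∀ t : ℝ, 1 < t →
      PsiOp n c g t
        = (Nat.factorial (n - 1) : ℂ) / (c ^ n * (Real.log t : ℂ) ^ (n + 1)) *
          ∫ u in (1:ℝ)..t, g u / (u : ℂ) *
            ((t : ℂ) ^ c * (u : ℂ) ^ (-c)
              - ∑ k ∈ Finset.range n,
                  (c * ((Real.log t : ℂ) - (Real.log u : ℂ))) ^ k / (Nat.factorial k : ℂ)) :=
  stmt_7_general n hn c hc g
end

section
/- Let c ∈ ℂ with c ≠ 0, n ≥ 1, and let f : [1,∞) → ℂ be absolutely continuous (on compact subintervals) with f(1) = 0. Then for all t > 1, Ψ_{n,c}[ u ↦ u f′(u) − c f(u) ](t) = (1/ log t) ∫₀^1 (1−v)^{n−1} f(t^v) dv. -/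
open MeasureTheory intervalIntegral

/-!
Write `L = log t`, `a = c L` and `F v = f (t ^ v)`. Substituting `u = t ^ v`, `F` is the primitive
of `ψ w = L t^w f'(t^w)` with `F 0 = 0`, and the argument of `Ψ` at `t ^ v` is `(ψ v - a F v) / L`.
After the substitution `s = r (1 - z)`, the inner integral times `r ^ n` (with `r = 1 - v`) is the
convolution `P r = ∫₀^r s^(n-1) e^(a(r-s)) ds`, which solves `P' = r^(n-1) + a P`, `P 0 = 0`.
Integrating by parts moves the derivative from `F` onto `P (1 - v)`; as `F` is only absolutely
continuous this is done by Fubini on the triangle `0 ≤ w ≤ v ≤ 1`. This turns `∫ P(1-v) ψ v` into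
`∫ ((1-v)^(n-1) + a P(1-v)) F v`, whose second term cancels `-a ∫ P(1-v) F v`.
-/

open Set

theorem integral_integral_triangle_swap {E : Type*} [NormedAddCommGroup E] [NormedSpace ℝ E]
    [CompleteSpace E] {a b : ℝ} (hab : a ≤ b) {g : ℝ → ℝ → E}
    (hg : IntegrableOn (Function.uncurry g) (Ioc a b ×ˢ Ioc a b)) :
    ∫ v in a..b, ∫ w in a..v, g v w = ∫ w in a..b, ∫ v in w..b, g v w := by
  let G : ℝ → ℝ → E := fun v w => {p : ℝ × ℝ | p.2 ≤ p.1}.indicator (Function.uncurry g) (v, w)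
  have hG : IntegrableOn (Function.uncurry G) (uIoc a b ×ˢ uIoc a b) := by
    rw [uIoc_of_le hab]
    exact hg.indicator (measurableSet_le measurable_snd measurable_fst)
  calc ∫ v in a..b, ∫ w in a..v, g v w = ∫ v in a..b, ∫ w in a..b, G v w := by
        refine integral_congr fun v hv => ?_
        rw [uIcc_of_le hab] at hv
        exact (intervalIntegral.integral_indicator hv).symm
    _ = ∫ w in a..b, ∫ v in a..b, G v w := intervalIntegral_intervalIntegral_swap hG
    _ = ∫ w in a..b, ∫ v in w..b, g v w := by
        refine integral_congr_ae (Filter.Eventually.of_forall fun w hw => ?_)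
        rw [uIoc_of_le hab] at hw
        have hset : Ioc a b ∩ Ici w = Icc w b := Set.ext fun v =>
          ⟨fun ⟨⟨_, hvb⟩, hwv⟩ => ⟨hwv, hvb⟩, fun ⟨hwv, hvb⟩ => ⟨⟨hw.1.trans_le hwv, hvb⟩, hwv⟩⟩
        change ∫ v in a..b, (Ici w).indicator (fun v => g v w) v = _
        rw [integral_of_le hab, integral_of_le hw.2, setIntegral_indicator measurableSet_Ici,
          hset, integral_Icc_eq_integral_Ioc]

theorem integral_mul_primitive {𝕜 : Type*} [RCLike 𝕜] {a b : ℝ} (hab : a ≤ b) {α ψ : ℝ → 𝕜}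
    (hα : IntervalIntegrable α volume a b) (hψ : IntervalIntegrable ψ volume a b) :
    ∫ v in a..b, α v * ∫ w in a..v, ψ w = ∫ w in a..b, (∫ v in w..b, α v) * ψ w := by
  have hαψ : IntegrableOn (Function.uncurry fun v w => α v * ψ w) (Ioc a b ×ˢ Ioc a b) := by
    rw [IntegrableOn, Measure.volume_eq_prod, ← Measure.prod_restrict]
    exact hα.1.mul_prod hψ.1
  simpa only [intervalIntegral.integral_const_mul, intervalIntegral.integral_mul_const] using
    integral_integral_triangle_swap hab hαψ

noncomputable def powExpConv (a : ℂ) (k : ℕ) (r : ℝ) : ℂ :=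
  ∫ s in (0:ℝ)..r, (s : ℂ) ^ k * Complex.exp (a * (r - s))

theorem powExpConv_eq_exp_mul_integral (a : ℂ) (k : ℕ) (r : ℝ) :
    powExpConv a k r
      = Complex.exp (a * r) * ∫ s in (0:ℝ)..r, (s : ℂ) ^ k * Complex.exp (-(a * s)) := by
  rw [powExpConv, ← intervalIntegral.integral_const_mul]
  refine integral_congr fun s _ => ?_
  rw [mul_sub, sub_eq_add_neg, Complex.exp_add]
  ring

theorem hasDerivAt_powExpConv (a : ℂ) (k : ℕ) (r : ℝ) :
    HasDerivAt (powExpConv a k) ((r : ℂ) ^ k + a * powExpConv a k r) r := by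
  have hcont : Continuous fun s : ℝ => (s : ℂ) ^ k * Complex.exp (-(a * s)) := by fun_prop
  have hexp : HasDerivAt (fun r : ℝ => Complex.exp (a * r)) (Complex.exp (a * r) * a) r := by
    simpa using ((hasDerivAt_id (r : ℂ)).const_mul a).cexp.comp_ofReal
  have h : HasDerivAt
      (fun r : ℝ => Complex.exp (a * r) * ∫ s in (0:ℝ)..r, (s : ℂ) ^ k * Complex.exp (-(a * s)))
      _ r := hexp.mul (integral_hasDerivAt_right (hcont.intervalIntegrable 0 r)
    (hcont.stronglyMeasurableAtFilter _ _) hcont.continuousAt)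
  rw [← funext (powExpConv_eq_exp_mul_integral a k)] at h
  convert h using 1
  have hinv : Complex.exp (a * r) * Complex.exp (-(a * r)) = 1 := by
    rw [← Complex.exp_add, add_neg_cancel, Complex.exp_zero]
  rw [powExpConv_eq_exp_mul_integral]
  linear_combination (-(r : ℂ) ^ k) * hinv

theorem continuous_powExpConv (a : ℂ) (k : ℕ) : Continuous (powExpConv a k) :=
  continuous_iff_continuousAt.2 fun r => (hasDerivAt_powExpConv a k r).continuousAt

theorem integral_pow_add_mul_powExpConv (a : ℂ) (k : ℕ) (r : ℝ) :
    ∫ s in (0:ℝ)..r, ((s : ℂ) ^ k + a * powExpConv a k s) = powExpConv a k r := by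
  have hcont : Continuous fun s : ℝ => (s : ℂ) ^ k + a * powExpConv a k s := by
    have := continuous_powExpConv a k
    fun_prop
  rw [integral_eq_sub_of_hasDerivAt (fun s _ => hasDerivAt_powExpConv a k s)
    (hcont.intervalIntegrable _ _)]
  simp [powExpConv]

theorem pow_mul_integral_eq_powExpConv (a : ℂ) {n : ℕ} (hn : 1 ≤ n) (r : ℝ) :
    (r : ℂ) ^ n * ∫ z in (0:ℝ)..1, ((1 - z : ℝ) : ℂ) ^ (n - 1) * Complex.exp (a * z * r)
      = powExpConv a (n - 1) r := by
  have hflip : ∫ z in (0:ℝ)..1, ((1 - z : ℝ) : ℂ) ^ (n - 1) * Complex.exp (a * z * r)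
      = ∫ z in (0:ℝ)..1, (z : ℂ) ^ (n - 1) * Complex.exp (a * ((1 - z : ℝ) : ℂ) * r) := by
    simpa using (intervalIntegral.integral_comp_sub_left
      (fun z : ℝ => (z : ℂ) ^ (n - 1) * Complex.exp (a * ((1 - z : ℝ) : ℂ) * r)) 1
      (a := 0) (b := 1))
  have hscale := intervalIntegral.smul_integral_comp_mul_left
    (fun s : ℝ => (s : ℂ) ^ (n - 1) * Complex.exp (a * (r - s))) (a := 0) (b := 1) r
  rw [mul_zero, mul_one] at hscale
  rw [powExpConv, ← hscale, hflip, ← Nat.sub_add_cancel hn, pow_succ, Nat.add_sub_cancel,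
    mul_comm _ (r : ℂ), mul_assoc, ← intervalIntegral.integral_const_mul, Complex.real_smul]
  congr 1
  refine integral_congr fun z _ => ?_
  push_cast
  ring_nf

theorem integral_powExpConv_mul_sub_mul_primitive (a : ℂ) (k : ℕ) {ψ : ℝ → ℂ}
    (hψ : IntervalIntegrable ψ volume 0 1) :
    ∫ v in (0:ℝ)..1, powExpConv a k (1 - v) * (ψ v - a * ∫ w in (0:ℝ)..v, ψ w)
      = ∫ v in (0:ℝ)..1, ((1 - v : ℝ) : ℂ) ^ k * ∫ w in (0:ℝ)..v, ψ w := by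
  have hP : Continuous fun v : ℝ => powExpConv a k (1 - v) := by
    have := continuous_powExpConv a k
    fun_prop
  have hpow : Continuous fun v : ℝ => ((1 - v : ℝ) : ℂ) ^ k := by fun_prop
  have hF : ContinuousOn (fun v => ∫ w in (0:ℝ)..v, ψ w) (uIcc 0 1) :=
    continuousOn_primitive_interval' hψ left_mem_uIcc
  have hPF : IntervalIntegrable (fun v => powExpConv a k (1 - v) * ∫ w in (0:ℝ)..v, ψ w)
      volume 0 1 := (hP.continuousOn.mul hF).intervalIntegrable
  have hpowF : IntervalIntegrable (fun v => ((1 - v : ℝ) : ℂ) ^ k * ∫ w in (0:ℝ)..v, ψ w)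
      volume 0 1 := (hpow.continuousOn.mul hF).intervalIntegrable
  have hα : ∀ w : ℝ, ∫ v in w..1, (((1 - v : ℝ) : ℂ) ^ k + a * powExpConv a k (1 - v))
      = powExpConv a k (1 - w) := fun w => by
    have h := intervalIntegral.integral_comp_sub_left
      (fun s : ℝ => (s : ℂ) ^ k + a * powExpConv a k s) 1 (a := w) (b := 1)
    rw [sub_self, integral_pow_add_mul_powExpConv] at h
    simpa using h
  have hparts := integral_mul_primitive zero_le_one
    (α := fun v => ((1 - v : ℝ) : ℂ) ^ k + a * powExpConv a k (1 - v))
    ((hpow.add (continuous_const.mul hP)).intervalIntegrable _ _) hψ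
  simp only [hα, add_mul, mul_assoc] at hparts
  rw [intervalIntegral.integral_add hpowF (hPF.const_mul a),
    intervalIntegral.integral_const_mul] at hparts
  simp only [mul_sub, mul_left_comm _ a]
  rw [intervalIntegral.integral_sub (hψ.continuousOn_mul hP.continuousOn) (hPF.const_mul a),
    intervalIntegral.integral_const_mul, ← hparts]
  ring

section RpowSubstitution

variable {E : Type*} [NormedAddCommGroup E] [NormedSpace ℝ E] {t : ℝ}

theorem integral_rpow_mul_log_smul_comp (ht : 1 ≤ t) (g : ℝ → E) (v : ℝ) :
    ∫ w in (0:ℝ)..v, (t ^ w * Real.log t) • g (t ^ w) = ∫ u in (1:ℝ)..t ^ v, g u := by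
  have hderiv w := (Real.hasStrictDerivAt_const_rpow (zero_lt_one.trans_le ht) w).hasDerivAt
  simpa using integral_deriv_smul_comp_of_deriv_nonneg (g := g) (a := 0) (b := v)
    (fun w _ => (hderiv w).continuousAt.continuousWithinAt) (fun w _ => hderiv w)
    (fun w _ => mul_nonneg (Real.rpow_nonneg (by linarith) w) (Real.log_nonneg ht))

theorem intervalIntegrable_rpow_mul_log_smul_comp_iff (ht : 1 ≤ t) (g : ℝ → E) (v : ℝ) :
    IntervalIntegrable (fun w => (t ^ w * Real.log t) • g (t ^ w)) volume 0 v ↔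
      IntervalIntegrable g volume 1 (t ^ v) := by
  have hderiv w := (Real.hasStrictDerivAt_const_rpow (zero_lt_one.trans_le ht) w).hasDerivAt
  simpa using integrable_deriv_smul_comp_iff_of_deriv_nonneg (g := g) (a := 0) (b := v)
    (fun w _ => (hderiv w).continuousAt.continuousWithinAt) (fun w _ => hderiv w)
    (fun w _ => mul_nonneg (Real.rpow_nonneg (by linarith) w) (Real.log_nonneg ht))

end RpowSubstitution

theorem psiOp_eq_integral_powExpConv {n : ℕ} (hn : 1 ≤ n) (c : ℂ) (g : ℝ → ℂ) (t : ℝ) :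
    PsiOp n c g t
      = ∫ v in (0:ℝ)..1, powExpConv (c * Real.log t) (n - 1) (1 - v) * g (t ^ v) := by
  refine integral_congr fun v _ => ?_
  rw [← pow_mul_integral_eq_powExpConv _ hn, mul_right_comm]
  congr 2
  refine integral_congr fun z _ => ?_
  push_cast
  ring_nf

theorem stmt_8_general (n : ℕ) (hn : 1 ≤ n) (c : ℂ)
    (f f' : ℝ → ℂ) (hf1 : f 1 = 0)
    (hf' : LocallyIntegrableOn f' (Set.Ici 1))
    (hAC : ∀ t : ℝ, 1 ≤ t → f t = f 1 + ∫ u in (1:ℝ)..t, f' u) :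
    ∀ t : ℝ, 1 < t →
      PsiOp n c (fun u => (u : ℂ) * f' u - c * f u) t
        = (1 / (Real.log t : ℂ)) *
            ∫ v in (0:ℝ)..1, ((1 - v : ℝ) : ℂ) ^ (n - 1) * f (t ^ v) := by
  intro t ht
  set ψ : ℝ → ℂ := fun w => (t ^ w * Real.log t) • f' (t ^ w)
  have hψ : IntervalIntegrable ψ volume 0 1 := by
    rw [intervalIntegrable_rpow_mul_log_smul_comp_iff ht.le, Real.rpow_one,
      intervalIntegrable_iff_integrableOn_Icc_of_le ht.le]
    exact hf'.integrableOn_compact_subset Icc_subset_Ici_self isCompact_Icc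
  have hF : ∀ v ∈ uIcc (0:ℝ) 1, f (t ^ v) = ∫ w in (0:ℝ)..v, ψ w := fun v hv => by
    rw [uIcc_of_le zero_le_one] at hv
    rw [hAC _ (Real.one_le_rpow ht.le hv.1), hf1, zero_add, integral_rpow_mul_log_smul_comp ht.le]
  have hlog : (Real.log t : ℂ) ≠ 0 := Complex.ofReal_ne_zero.2 (Real.log_pos ht).ne'
  rw [psiOp_eq_integral_powExpConv hn]
  calc _ = 1 / (Real.log t : ℂ) * ∫ v in (0:ℝ)..1, powExpConv (c * Real.log t) (n - 1) (1 - v)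
        * (ψ v - c * Real.log t * ∫ w in (0:ℝ)..v, ψ w) := by
        rw [← intervalIntegral.integral_const_mul]
        refine integral_congr fun v hv => ?_
        rw [← hF v hv]
        simp only [ψ, Complex.real_smul]
        push_cast
        field_simp
    _ = _ := by
        rw [integral_powExpConv_mul_sub_mul_primitive _ _ hψ]
        congr 1
        exact integral_congr fun v hv => by rw [hF v hv]

theorem stmt_8 (n : ℕ) (hn : 1 ≤ n) (c : ℂ) (hc : c ≠ 0)
    (f f' : ℝ → ℂ) (hf1 : f 1 = 0)
    (hf' : LocallyIntegrableOn f' (Set.Ici 1))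
    (hAC : ∀ t : ℝ, 1 ≤ t → f t = f 1 + ∫ u in (1:ℝ)..t, f' u) :
    ∀ t : ℝ, 1 < t →
      PsiOp n c (fun u => (u : ℂ) * f' u - c * f u) t
        = (1 / (Real.log t : ℂ)) *
            ∫ v in (0:ℝ)..1, ((1 - v : ℝ) : ℂ) ^ (n - 1) * f (t ^ v) :=
  stmt_8_general n hn c f f' hf1 hf' hAC
end

section
/- Let s ∈ ℂ with Re(s) ∈ (0,1), let η : [1,∞) → ℝ be bounded and locally integrable, and suppose the solutions ψ_s(1,·) and ψ_{1−s̄}(1,·) of dx/dt = w t^{−1} x + (1−w) t^{−1} η(t) with initial value 1 (for w = s and w = 1−s̄ respectively) are both bounded on [1,∞). Define φ_s(t) = (ψ_s(1,t) − 1)/(1−s) and φ_{1−s̄}(t) = (ψ_{1−s̄}(1,t) − 1)/s̄, and δ_s = φ_s − φ_{1−s̄}. Then with σ = Re(s), δ_s satisfies both t δ_s′(t) = s δ_s(t) − (1−2σ)(φ_{1−s̄}(t) + 1/(s̄(1−s))) and t δ_s′(t) = (1−s̄) δ_s(t) − (1−2σ)(φ_s(t) + 1/(s̄(1−s))), with δ_s(1)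 = 0. -/
/-!
Since `psiSol w η` solves `t ψ' = w ψ + (1 - w) η`, the normalized function
`φ_w = (ψ_w - 1) / (1 - w)` solves `t φ_w' = w φ_w + η + w / (1 - w)`. The function `φ_{1-s̄}` is
`φ_w` for `w = 1 - s̄`, so `t δ_s'` is a combination of `φ_s`, `φ_{1-s̄}` and constants, and both
claimed forms follow from `2σ = s + s̄` by algebra.
-/

open MeasureTheory intervalIntegral

/-- The solution formula of the parametrized ODE with initial value `1`. -/
noncomputable def psiSol (w : ℂ) (η : ℝ → ℝ) (t : ℝ) : ℂ :=
  (t : ℂ) ^ w * (1 + (1 - w) * ∫ u in (1:ℝ)..t, (u : ℂ) ^ (-1 - w) * (η u : ℂ))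

lemma psiSol_one (w : ℂ) (η : ℝ → ℝ) : psiSol w η 1 = 1 := by
  simp [psiSol]

lemma MeasureTheory.LocallyIntegrableOn.ofReal {η : ℝ → ℝ} {s : Set ℝ}
    (hη : LocallyIntegrableOn η s) :
    LocallyIntegrableOn (fun u => (η u : ℂ)) s := fun x hx =>
  let ⟨u, hu, hint⟩ := hη x hx
  ⟨u, hu, hint.ofReal⟩

lemma locallyIntegrableOn_cpow_mul {η : ℝ → ℝ} (hη : LocallyIntegrableOn η (Set.Ici 1)) (z : ℂ) :
    LocallyIntegrableOn (fun u : ℝ => (u : ℂ) ^ z * (η u : ℂ)) (Set.Ici 1) :=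
  hη.ofReal.continuousOn_mul
    (fun u hu => (Complex.continuousAt_ofReal_cpow_const u z
      (Or.inr (one_pos.trans_le (Set.mem_Ici.mp hu)).ne')).continuousWithinAt)
    isClosed_Ici.isLocallyClosed

lemma hasDerivAt_integral_cpow_mul {η : ℝ → ℝ} (hη : LocallyIntegrableOn η (Set.Ici 1)) (z : ℂ)
    {t : ℝ} (ht : 1 < t) (hηt : ContinuousAt η t) :
    HasDerivAt (fun x => ∫ u in (1:ℝ)..x, (u : ℂ) ^ z * (η u : ℂ))
      ((t : ℂ) ^ z * (η t : ℂ)) t := by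
  have hf := locallyIntegrableOn_cpow_mul hη z
  have hint : IntervalIntegrable (fun u : ℝ => (u : ℂ) ^ z * (η u : ℂ)) volume 1 t := by
    rw [intervalIntegrable_iff_integrableOn_Icc_of_le ht.le]
    exact hf.integrableOn_compact_subset Set.Icc_subset_Ici_self isCompact_Icc
  have hcont : ContinuousAt (fun u : ℝ => (u : ℂ) ^ z * (η u : ℂ)) t :=
    (Complex.continuousAt_ofReal_cpow_const t z (Or.inr (one_pos.trans ht).ne')).mul
      (Complex.continuous_ofReal.continuousAt.comp hηt)
  exact integral_hasDerivAt_right hint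
    ⟨Set.Ici 1, Ici_mem_nhds ht, hf.aestronglyMeasurable⟩ hcont

lemma hasDerivAt_psiSol (w : ℂ) {η : ℝ → ℝ} (hη : LocallyIntegrableOn η (Set.Ici 1))
    {t : ℝ} (ht : 1 < t) (hηt : ContinuousAt η t) :
    HasDerivAt (psiSol w η) ((w * psiSol w η t + (1 - w) * (η t : ℂ)) / t) t := by
  have ht₀ : (0:ℝ) < t := one_pos.trans ht
  have htC : (t : ℂ) ≠ 0 := by exact_mod_cast ht₀.ne'
  have hpow : HasDerivAt (fun x : ℝ => (x : ℂ) ^ w) (w * (t : ℂ) ^ (w - 1)) t :=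
    (Complex.hasStrictDerivAt_cpow_const (Or.inl (by simpa using ht₀))).hasDerivAt.comp_ofReal
  refine (hpow.mul (((hasDerivAt_integral_cpow_mul hη (-1 - w) ht hηt).const_mul
    (1 - w)).const_add 1)).congr_deriv ?_
  have hsub : (t : ℂ) ^ (w - 1) = (t : ℂ) ^ w / t := by
    rw [Complex.cpow_sub _ _ htC, Complex.cpow_one]
  have hadd : (t : ℂ) ^ w * (t : ℂ) ^ (-1 - w) = (t : ℂ)⁻¹ := by
    rw [← Complex.cpow_add _ _ htC, add_sub_cancel, Complex.cpow_neg_one]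
  rw [psiSol, hsub, show (t : ℂ) ^ w * ((1 - w) * ((t : ℂ) ^ (-1 - w) * (η t : ℂ)))
      = (1 - w) * (η t : ℂ) * ((t : ℂ) ^ w * (t : ℂ) ^ (-1 - w)) by ring, hadd]
  field_simp

lemma hasDerivAt_normalized_psiSol {w : ℂ} (hw : w ≠ 1) {η : ℝ → ℝ}
    (hη : LocallyIntegrableOn η (Set.Ici 1)) {t : ℝ} (ht : 1 < t) (hηt : ContinuousAt η t) :
    HasDerivAt (fun x => (psiSol w η x - 1) / (1 - w))
      ((w * ((psiSol w η t - 1) / (1 - w)) + η t + w / (1 - w)) / t) t := by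
  have hw' : 1 - w ≠ 0 := sub_ne_zero.mpr hw.symm
  refine (((hasDerivAt_psiSol w hη ht hηt).sub_const 1).div_const (1 - w)).congr_deriv ?_
  field_simp
  ring

theorem stmt_10_general (s : ℂ) (hs : s.re ∈ Set.Ioo (0:ℝ) 1)
    (η : ℝ → ℝ)
    (hloc : LocallyIntegrableOn η (Set.Ici 1))
    (φ₁ φ₂ δ : ℝ → ℂ)
    (hφ₁ : φ₁ = fun t => (psiSol s η t - 1) / (1 - s))
    (hφ₂ : φ₂ = fun t => (psiSol (1 - (starRingEnd ℂ) s) η t - 1) / (starRingEnd ℂ) s)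
    (hδ : δ = φ₁ - φ₂) (σ : ℝ) (hσ : σ = s.re) :
    δ 1 = 0 ∧
    (∀ t : ℝ, 1 < t → ContinuousAt η t →
      HasDerivAt δ
        ((s * δ t - (1 - 2 * (σ : ℂ)) * (φ₂ t + 1 / ((starRingEnd ℂ) s * (1 - s)))) / (t : ℂ)) t) ∧
    (∀ t : ℝ, 1 < t → ContinuousAt η t →
      HasDerivAt δ
        (((1 - (starRingEnd ℂ) s) * δ t
          - (1 - 2 * (σ : ℂ)) * (φ₁ t + 1 / ((starRingEnd ℂ) s * (1 - s)))) / (t : ℂ)) t) := by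
  subst hδ hσ
  have hs₀ : s ≠ 0 := fun h => by simp [h] at hs
  have hs₁ : s ≠ 1 := fun h => by simp [h] at hs
  have hconj₀ : (starRingEnd ℂ) s ≠ 0 := (map_ne_zero _).mpr hs₀
  have hre : 2 * (s.re : ℂ) = s + (starRingEnd ℂ) s := by
    rw [Complex.add_conj]; push_cast; ring
  have hderiv : ∀ t, 1 < t → ContinuousAt η t → HasDerivAt (φ₁ - φ₂)
      ((s * φ₁ t + η t + s / (1 - s)) / t - ((1 - (starRingEnd ℂ) s) * φ₂ t + η t
        + (1 - (starRingEnd ℂ) s) / (starRingEnd ℂ) s) / t) t := fun t ht hηt => by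
    have h₁ := hasDerivAt_normalized_psiSol hs₁ hloc ht hηt
    have h₂ := hasDerivAt_normalized_psiSol (w := 1 - (starRingEnd ℂ) s)
      (by simpa using hconj₀) hloc ht hηt
    rw [sub_sub_cancel] at h₂
    subst hφ₁ hφ₂
    exact h₁.sub h₂
  refine ⟨by simp [hφ₁, hφ₂, psiSol_one], fun t ht hηt => ?_, fun t ht hηt => ?_⟩
  all_goals
    refine (hderiv t ht hηt).congr_deriv ?_
    rw [hre, Pi.sub_apply]
    field_simp
    ring

theorem stmt_10 (s : ℂ) (hs : s.re ∈ Set.Ioo (0:ℝ) 1)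
    (η : ℝ → ℝ) (hbd : ∃ C, ∀ t : ℝ, 1 ≤ t → |η t| ≤ C)
    (hloc : LocallyIntegrableOn η (Set.Ici 1))
    (hbd₁ : ∃ M, ∀ t : ℝ, 1 ≤ t → ‖psiSol s η t‖ ≤ M)
    (hbd₂ : ∃ M, ∀ t : ℝ, 1 ≤ t → ‖psiSol (1 - (starRingEnd ℂ) s) η t‖ ≤ M)
    (φ₁ φ₂ δ : ℝ → ℂ)
    (hφ₁ : φ₁ = fun t => (psiSol s η t - 1) / (1 - s))
    (hφ₂ : φ₂ = fun t => (psiSol (1 - (starRingEnd ℂ) s) η t - 1) / (starRingEnd ℂ) s)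
    (hδ : δ = φ₁ - φ₂) (σ : ℝ) (hσ : σ = s.re) :
    δ 1 = 0 ∧
    (∀ t : ℝ, 1 < t → ContinuousAt η t →
      HasDerivAt δ
        ((s * δ t - (1 - 2 * (σ : ℂ)) * (φ₂ t + 1 / ((starRingEnd ℂ) s * (1 - s)))) / (t : ℂ)) t) ∧
    (∀ t : ℝ, 1 < t → ContinuousAt η t →
      HasDerivAt δ
        (((1 - (starRingEnd ℂ) s) * δ t
          - (1 - 2 * (σ : ℂ)) * (φ₁ t + 1 / ((starRingEnd ℂ) s * (1 - s)))) / (t : ℂ)) t) :=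
  stmt_10_general s hs η hloc φ₁ φ₂ δ hφ₁ hφ₂ hδ σ hσ
end
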